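/- For all real q, p₀, p₁ with 0 ≤ p₁ ≤ p₀ ≤ 1 and 0 ≤ q ≤ 1, max(q, 1−q, q·p₀ + (1−q)·(1−p₁)) ≥ max(q, 1−q, min(q,1−q)·(1 + (p₀−p₁))) and this maximum is at least 1/2. -/

import Mathlib

/-!
The first inequality compares only the third entries: the attack's accuracy exceeds
`min q (1 - q) * (1 + (p₀ - p₁))` by `(1 - 2q)(1 - p₁)` when `q ≤ 1/2` and by `(2q - 1) p₀`
otherwise. The second holds because `q` and `1 - q` cannot both be below `1/2`.
-/

theorem half_le_max_self_one_sub {α : Type*} [Field α] [LinearOrder α] [IsStrictOrderedRing α]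
    (q : α) : 1 / 2 ≤ max q (1 - q) := by
  rcases le_total q (1 - q) with h | h
  · rw [max_eq_right h]; linarith
  · rw [max_eq_left h]; linarith

theorem min_self_one_sub_mul_one_add_sub_le {α : Type*} [CommRing α] [LinearOrder α]
    [IsStrictOrderedRing α] {q p₀ p₁ : α} (hp₀ : 0 ≤ p₀) (hp₁ : p₁ ≤ 1) :
    min q (1 - q) * (1 + (p₀ - p₁)) ≤ q * p₀ + (1 - q) * (1 - p₁) := by
  rcases le_total q (1 - q) with h | h
  · rw [min_eq_left h]
    linarith [mul_nonneg (sub_nonneg.2 h) (sub_nonneg.2 hp₁)]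
  · rw [min_eq_right h]
    linarith [mul_nonneg (sub_nonneg.2 h) hp₀]

theorem lower_bound_chain_general (q p₀ p₁ : ℝ)
    (h1 : 0 ≤ p₁) (h2 : p₁ ≤ p₀) (h3 : p₀ ≤ 1) :
    max (max q (1 - q)) (q * p₀ + (1 - q) * (1 - p₁)) ≥
      max (max q (1 - q)) (min q (1 - q) * (1 + (p₀ - p₁))) ∧
    max (max q (1 - q)) (q * p₀ + (1 - q) * (1 - p₁)) ≥ 1 / 2 :=
  ⟨max_le_max le_rfl (min_self_one_sub_mul_one_add_sub_le (h1.trans h2) (h2.trans h3)),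
    (half_le_max_self_one_sub q).trans (le_max_left _ _)⟩

theorem lower_bound_chain (q p₀ p₁ : ℝ)
    (h1 : 0 ≤ p₁) (h2 : p₁ ≤ p₀) (h3 : p₀ ≤ 1) (h4 : 0 ≤ q) (h5 : q ≤ 1) :
    max (max q (1 - q)) (q * p₀ + (1 - q) * (1 - p₁)) ≥
      max (max q (1 - q)) (min q (1 - q) * (1 + (p₀ - p₁))) ∧
    max (max q (1 - q)) (q * p₀ + (1 - q) * (1 - p₁)) ≥ 1 / 2 :=
  lower_bound_chain_general q p₀ p₁ h1 h2 h3
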